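/- arXiv:1611.06923 — 2 statements merged into one kernel-verified Lean document; each statement's English description precedes it below -/
import Mathlib

section
/- If positive magnitudes A, B have a common measure (there is G > 0 with A = p·G and B = q·G for positive integers p, q) and A/B = C/D, then C and D have a common measure, and moreover C and D are equimultiples of a common measure in the same proportion p : q as A and B. -/
/-- If `A = p·G`, `B = q·G` for a common measure `G > 0` and `A/B = C/D`,
then `C` and `D` are equimultiples `C = p·H`, `D = q·H` of a common measure
`H > 0`. -/
theorem common_measure_transfer (A B C D G : ℝ) (p q : ℕ)
    (hA : 0 < A) (hB : 0 < B) (hC : 0 < C) (hD : 0 < D) (hG : 0 < G)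
    (hp : 0 < p) (hq : 0 < q)
    (hAG : A = (p : ℝ) * G) (hBG : B = (q : ℝ) * G)
    (hprop : A / B = C / D) :
    ∃ H : ℝ, 0 < H ∧ C = (p : ℝ) * H ∧ D = (q : ℝ) * H := by
  have hp' : (0 : ℝ) < p := by exact_mod_cast hp
  have hq' : (0 : ℝ) < q := by exact_mod_cast hq
  refine ⟨C / p, div_pos hC hp', by field_simp, ?_⟩
  have h : A * D = C * B := (div_eq_div_iff hB.ne' hD.ne').mp hprop
  rw [hAG, hBG] at h
  field_simp
  nlinarith [hG]
end

section
/- A continuous function on an interval need not have a derivative at any point: there exists a continuous function f : ℝ → ℝ that is nowhere differentiable. -/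
/-!
The Takagi function `T x = ∑ 2⁻ⁿ d(2ⁿ x, ℤ)` is continuous, being a uniformly convergent series
of continuous functions. Across the dyadic interval `[k / 2ᵐ, (k + 1) / 2ᵐ]` containing `x`, the
terms with `n ≥ m` do not change (their arguments differ by an integer), while each term with
`n < m` is affine with slope `±1`. So the slope of `T` across this interval is a partial sum
`∑_{n < m} ±1`. Were `T` differentiable at `x`, these slopes would converge to `T' x`, because the
intervals shrink to `x` while straddling it; but then their increments `±1` would tend to `0`.
-/

open Filter Topology Asymptotics Finset Set

theorem HasDerivAt.tendsto_slope_of_le_of_le {E : Type*} [NormedAddCommGroup E]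
    [NormedSpace ℝ E] {f : ℝ → E} {f' : E} {x : ℝ} (hf : HasDerivAt f f' x)
    {α : Type*} {l : Filter α} {u v : α → ℝ} (hu : Tendsto u l (𝓝 x))
    (hv : Tendsto v l (𝓝 x)) (hux : ∀ i, u i ≤ x) (hxv : ∀ i, x ≤ v i)
    (huv : ∀ i, u i < v i) :
    Tendsto (fun i => slope f (u i) (v i)) l (𝓝 f') := by
  set g : ℝ → E := fun y => f y - f x - (y - x) • f'
  have hg : g =o[𝓝 x] fun y => y - x := hasDerivAt_iff_isLittleO.1 hf
  have hgv : (fun i => g (v i)) =o[l] fun i => v i - u i :=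
    (hg.comp_tendsto hv).trans_isBigO <| IsBigO.of_bound 1 <| Eventually.of_forall fun i => by
      simp only [Function.comp_apply, Real.norm_eq_abs, one_mul]
      rw [abs_of_nonneg (sub_nonneg.2 (hxv i)), abs_of_pos (sub_pos.2 (huv i))]
      linarith [hux i]
  have hgu : (fun i => g (u i)) =o[l] fun i => v i - u i :=
    (hg.comp_tendsto hu).trans_isBigO <| IsBigO.of_bound 1 <| Eventually.of_forall fun i => by
      simp only [Function.comp_apply, Real.norm_eq_abs, one_mul]
      rw [abs_of_nonpos (sub_nonpos.2 (hux i)), abs_of_pos (sub_pos.2 (huv i))]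
      linarith [hxv i]
  have hslope : ∀ i, (v i - u i)⁻¹ • (g (v i) - g (u i)) = slope f (u i) (v i) - f' := by
    intro i
    have hg_sub : g (v i) - g (u i) = (f (v i) - f (u i)) - (v i - u i) • f' := by
      simp only [g, sub_smul]; abel
    rw [hg_sub, smul_sub, smul_smul, inv_mul_cancel₀ (sub_pos.2 (huv i)).ne', one_smul,
      slope_def_module]
  rw [← tendsto_sub_nhds_zero_iff]
  simpa only [hslope] using (hgv.sub hgu).tendsto_inv_smul_nhds_zero

theorem tendsto_nhds_zero_of_tendsto_sum_range {E : Type*} [AddCommGroup E] [TopologicalSpace E]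
    [IsTopologicalAddGroup E] {f : ℕ → E} {a : E}
    (h : Tendsto (fun n => ∑ i ∈ range n, f i) atTop (𝓝 a)) : Tendsto f atTop (𝓝 0) := by
  simpa [sum_range_succ_sub_sum] using (h.comp (tendsto_add_atTop_nat 1)).sub h

-- the distance from `x` to the nearest integer
noncomputable def saw (x : ℝ) : ℝ := ‖(x : UnitAddCircle)‖

theorem saw_add_intCast (x : ℝ) (k : ℤ) : saw (x + k) = saw x := by
  simp [saw]

theorem saw_nonneg (x : ℝ) : 0 ≤ saw x :=
  norm_nonneg _

theorem saw_le_half (x : ℝ) : saw x ≤ 1 / 2 := by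
  simpa [saw] using AddCircle.norm_le_half_period (1 : ℝ) (x := (x : UnitAddCircle)) one_ne_zero

theorem continuous_saw : Continuous saw :=
  continuous_norm.comp (AddCircle.continuous_mk' 1)

theorem saw_eq_abs_sub_intCast {x : ℝ} (k : ℤ) (h : |x - k| ≤ 1 / 2) : saw x = |x - k| := by
  rw [← sub_add_cancel x k, saw_add_intCast, add_sub_cancel_right]
  exact (AddCircle.norm_coe_eq_abs_iff 1 one_ne_zero).2 (by simpa using h)

theorem saw_sub_saw_of_mem_Icc (j : ℤ) {a b : ℝ} (ha : a ∈ Icc (j / 2 : ℝ) ((j + 1) / 2))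
    (hb : b ∈ Icc (j / 2 : ℝ) ((j + 1) / 2)) : saw b - saw a = (-1 : ℝ) ^ j * (b - a) := by
  obtain ⟨q, rfl | rfl⟩ := Int.even_or_odd' j
  · have hsaw : ∀ t ∈ Icc ((2 * q : ℤ) / 2 : ℝ) (((2 * q : ℤ) + 1) / 2), saw t = t - q := by
      rintro t ⟨ht₁, ht₂⟩
      push_cast at ht₁ ht₂
      rw [saw_eq_abs_sub_intCast q (abs_le.2 ⟨by linarith, by linarith⟩),
        abs_of_nonneg (by linarith)]
    rw [hsaw a ha, hsaw b hb, (even_two_mul q).neg_one_zpow]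
    ring
  · have hsaw : ∀ t ∈ Icc ((2 * q + 1 : ℤ) / 2 : ℝ) (((2 * q + 1 : ℤ) + 1) / 2),
        saw t = q + 1 - t := by
      rintro t ⟨ht₁, ht₂⟩
      push_cast at ht₁ ht₂
      rw [saw_eq_abs_sub_intCast (q + 1)
          (abs_le.2 ⟨by push_cast; linarith, by push_cast; linarith⟩),
        abs_of_nonpos (by push_cast; linarith)]
      push_cast
      ring
    rw [hsaw a ha, hsaw b hb, (odd_two_mul_add_one q).neg_one_zpow]
    ring

theorem tendsto_one_div_two_pow : Tendsto (fun m : ℕ => 1 / (2 : ℝ) ^ m) atTop (𝓝 0) := by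
  simpa only [one_div_pow] using
    tendsto_pow_atTop_nhds_zero_of_lt_one (by norm_num : (0 : ℝ) ≤ 1 / 2) (by norm_num)

noncomputable def dyadicLower (x : ℝ) (m : ℕ) : ℝ := ⌊2 ^ m * x⌋ / 2 ^ m

noncomputable def dyadicUpper (x : ℝ) (m : ℕ) : ℝ := dyadicLower x m + 1 / 2 ^ m

theorem dyadicLower_le (x : ℝ) (m : ℕ) : dyadicLower x m ≤ x := by
  rw [dyadicLower, div_le_iff₀' (by positivity)]
  exact Int.floor_le _

theorem lt_dyadicUpper (x : ℝ) (m : ℕ) : x < dyadicUpper x m := by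
  rw [dyadicUpper, dyadicLower, ← add_div, lt_div_iff₀' (by positivity)]
  exact Int.lt_floor_add_one _

theorem dyadicLower_lt_dyadicUpper (x : ℝ) (m : ℕ) : dyadicLower x m < dyadicUpper x m :=
  lt_add_of_pos_right _ (by positivity)

theorem tendsto_dyadicLower (x : ℝ) : Tendsto (dyadicLower x) atTop (𝓝 x) := by
  have hlow : Tendsto (fun m : ℕ => x - 1 / 2 ^ m) atTop (𝓝 x) := by
    simpa only [sub_zero] using tendsto_const_nhds.sub tendsto_one_div_two_pow
  refine tendsto_of_tendsto_of_tendsto_of_le_of_le hlow tendsto_const_nhds (fun m => ?_)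
    (dyadicLower_le x)
  have hupper := lt_dyadicUpper x m
  rw [dyadicUpper] at hupper
  linarith

theorem tendsto_dyadicUpper (x : ℝ) : Tendsto (dyadicUpper x) atTop (𝓝 x) := by
  have hsum := (tendsto_dyadicLower x).add tendsto_one_div_two_pow
  rwa [add_zero] at hsum

theorem dyadicLower_mono (x : ℝ) : Monotone (dyadicLower x) := by
  refine monotone_nat_of_le_succ fun m => ?_
  have hfloor : 2 * ⌊2 ^ m * x⌋ ≤ ⌊2 ^ (m + 1) * x⌋ := by
    rw [Int.le_floor, pow_succ]
    push_cast
    linarith [Int.floor_le (2 ^ m * x)]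
  calc dyadicLower x m = (2 * ⌊2 ^ m * x⌋ : ℤ) / (2 : ℝ) ^ (m + 1) := by
        rw [dyadicLower, pow_succ]; push_cast; field_simp
    _ ≤ dyadicLower x (m + 1) := by rw [dyadicLower]; gcongr

theorem dyadicUpper_anti (x : ℝ) : Antitone (dyadicUpper x) := by
  refine antitone_nat_of_succ_le fun m => ?_
  have hfloor : ⌊2 ^ (m + 1) * x⌋ + 1 ≤ 2 * (⌊2 ^ m * x⌋ + 1) := by
    rw [Int.add_one_le_iff, Int.floor_lt, pow_succ]
    push_cast
    linarith [Int.lt_floor_add_one (2 ^ m * x)]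
  calc dyadicUpper x (m + 1) = (⌊2 ^ (m + 1) * x⌋ + 1 : ℤ) / (2 : ℝ) ^ (m + 1) := by
        rw [dyadicUpper, dyadicLower, ← add_div]; push_cast; rfl
    _ ≤ (2 * (⌊2 ^ m * x⌋ + 1) : ℤ) / (2 : ℝ) ^ (m + 1) := by gcongr
    _ = dyadicUpper x m := by
        rw [dyadicUpper, dyadicLower, ← add_div, pow_succ]; push_cast; field_simp

theorem two_pow_mul_mem_Icc_of_mem_dyadic {x t : ℝ} {n m : ℕ} (hnm : n < m)
    (ht : t ∈ Icc (dyadicLower x m) (dyadicUpper x m)) :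
    2 ^ n * t ∈ Icc (⌊2 ^ (n + 1) * x⌋ / 2 : ℝ) ((⌊2 ^ (n + 1) * x⌋ + 1) / 2) := by
  have hlow := (dyadicLower_mono x hnm).trans ht.1
  have hupp := ht.2.trans (dyadicUpper_anti x hnm)
  constructor
  · calc (⌊2 ^ (n + 1) * x⌋ / 2 : ℝ) = 2 ^ n * dyadicLower x (n + 1) := by
          rw [dyadicLower, pow_succ]; field_simp
      _ ≤ 2 ^ n * t := by gcongr
  · calc 2 ^ n * t ≤ 2 ^ n * dyadicUpper x (n + 1) := by gcongr
      _ = (⌊2 ^ (n + 1) * x⌋ + 1) / 2 := by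
          rw [dyadicUpper, dyadicLower, pow_succ]; field_simp

noncomputable def takagi (x : ℝ) : ℝ := ∑' n : ℕ, saw (2 ^ n * x) / 2 ^ n

theorem saw_two_pow_mul_div_le (x : ℝ) (n : ℕ) : saw (2 ^ n * x) / 2 ^ n ≤ 1 / 2 / 2 ^ n := by
  gcongr
  exact saw_le_half _

theorem summable_takagi (x : ℝ) : Summable fun n : ℕ => saw (2 ^ n * x) / 2 ^ n :=
  (summable_geometric_two' 1).of_nonneg_of_le (fun n => div_nonneg (saw_nonneg _) (by positivity))
    (saw_two_pow_mul_div_le x)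

theorem continuous_takagi : Continuous takagi :=
  continuous_tsum (fun n => (continuous_saw.comp (continuous_const_mul _)).div_const _)
    (summable_geometric_two' 1) fun n x => by
      rw [Real.norm_of_nonneg (div_nonneg (saw_nonneg _) (by positivity))]
      exact saw_two_pow_mul_div_le x n

theorem takagi_dyadicUpper_sub_dyadicLower (x : ℝ) (m : ℕ) :
    takagi (dyadicUpper x m) - takagi (dyadicLower x m) =
      (∑ n ∈ range m, (-1 : ℝ) ^ ⌊2 ^ (n + 1) * x⌋) / 2 ^ m := by
  rw [takagi, takagi, ← (summable_takagi _).tsum_sub (summable_takagi _), sum_div]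
  refine tsum_eq_sum (fun n hn => ?_) |>.trans (sum_congr rfl fun n hn => ?_)
  · obtain ⟨j, rfl⟩ := Nat.exists_eq_add_of_le (not_lt.1 (mem_range.not.1 hn))
    have hshift : 2 ^ (m + j) * dyadicUpper x m =
        2 ^ (m + j) * dyadicLower x m + ((2 ^ j : ℤ) : ℝ) := by
      rw [dyadicUpper, pow_add]; push_cast; field_simp
    rw [hshift, saw_add_intCast, sub_self]
  · have hle := (dyadicLower_lt_dyadicUpper x m).le
    rw [← sub_div, saw_sub_saw_of_mem_Icc _
      (two_pow_mul_mem_Icc_of_mem_dyadic (mem_range.1 hn) ⟨le_rfl, hle⟩)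
      (two_pow_mul_mem_Icc_of_mem_dyadic (mem_range.1 hn) ⟨hle, le_rfl⟩), ← mul_sub, dyadicUpper]
    field_simp
    ring

theorem slope_takagi_dyadic (x : ℝ) (m : ℕ) :
    slope takagi (dyadicLower x m) (dyadicUpper x m) =
      ∑ n ∈ range m, (-1 : ℝ) ^ ⌊2 ^ (n + 1) * x⌋ := by
  rw [slope_def_field, takagi_dyadicUpper_sub_dyadicLower, dyadicUpper, add_sub_cancel_left,
    div_div_div_cancel_right₀ (by positivity), div_one]

/-- There exists a continuous function `f : ℝ → ℝ` that is nowhere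
differentiable. -/
theorem exists_continuous_nowhere_differentiable :
    ∃ f : ℝ → ℝ, Continuous f ∧ ∀ x : ℝ, ¬ DifferentiableAt ℝ f x := by
  refine ⟨takagi, continuous_takagi, fun x hx => ?_⟩
  have hslope := hx.hasDerivAt.tendsto_slope_of_le_of_le (tendsto_dyadicLower x)
    (tendsto_dyadicUpper x) (dyadicLower_le x) (fun m => (lt_dyadicUpper x m).le)
    (dyadicLower_lt_dyadicUpper x)
  simp only [slope_takagi_dyadic] at hslope
  have hsign := (tendsto_nhds_zero_of_tendsto_sum_range hslope).abs
  simp only [abs_neg_one_zpow, abs_zero] at hsign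
  exact one_ne_zero (tendsto_const_nhds_iff.1 hsign)
end
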